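/- arXiv:2109.07936 — 2 statements merged into one kernel-verified Lean document; each statement's English description precedes it below -/
import Mathlib

section
/- For every real η (including negative values), 0 ≤ 1 - (2/√π)·(exp(-η²)/(1+erf(η)))·[(1/√π)·(exp(-η²)/(1+erf(η))) + η] ≤ 1. -/
open Real Set

noncomputable def erf (x : ℝ) : ℝ := (2 / Real.sqrt π) * ∫ y in (0:ℝ)..x, Real.exp (-y^2)

noncomputable def gfun (η : ℝ) : ℝ :=
  1 - (2 / Real.sqrt π) * (Real.exp (-η^2) / (1 + erf η)) *
    ((1 / Real.sqrt π) * (Real.exp (-η^2) / (1 + erf η)) + η)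

/-! Write `E η = ∫_{-∞}^η e^{-y²} dy = (√π / 2) (1 + erf η)` and `X = e^{-η²}`, so that
`gfun η = 1 - X (X + 2ηE) / (2E²)`. The upper bound is `X + 2ηE ≥ 0`: trivial for `η ≥ 0`, and the
classical Mills-ratio bound `E ≤ X / (2|η|)` for `η < 0`. The lower bound is
`2E² - 2ηXE - X² ≥ 0`, i.e. `E` lies above the larger root `X (η + √(η² + 2)) / 2` of this
quadratic, which is Birnbaum's lower bound for the Mills ratio. Both Mills bounds follow by
comparing `e^{-y²}` on `(-∞, η]` with the derivative of an explicit function vanishing at `-∞`. -/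

open MeasureTheory Filter Topology

section ImproperComparison

variable {f F F' : ℝ → ℝ} {b m : ℝ}

theorem sub_le_integral_Iic_of_hasDerivAt_of_le (hderiv : ∀ x ≤ b, HasDerivAt F (F' x) x)
    (hle : ∀ x ≤ b, F' x ≤ f x) (hf : IntegrableOn f (Iic b)) (hF : Tendsto F atBot (𝓝 m)) :
    F b - m ≤ ∫ x in Iic b, f x := by
  refine le_of_tendsto_of_tendsto (tendsto_const_nhds.sub hF)
    (intervalIntegral_tendsto_integral_Iic b hf tendsto_id) ?_
  filter_upwards [eventually_le_atBot b] with a hab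
  exact intervalIntegral.sub_le_integral_of_hasDeriv_right_of_le hab
    (fun x hx => (hderiv x hx.2).continuousAt.continuousWithinAt)
    (fun x hx => (hderiv x hx.2.le).hasDerivWithinAt) (hf.mono_set Icc_subset_Iic_self)
    (fun x hx => hle x hx.2.le)

theorem integral_Iic_le_sub_of_hasDerivAt_of_le (hderiv : ∀ x ≤ b, HasDerivAt F (F' x) x)
    (hle : ∀ x ≤ b, f x ≤ F' x) (hf : IntegrableOn f (Iic b)) (hF : Tendsto F atBot (𝓝 m)) :
    ∫ x in Iic b, f x ≤ F b - m := by
  refine le_of_tendsto_of_tendsto (intervalIntegral_tendsto_integral_Iic b hf tendsto_id)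
    (tendsto_const_nhds.sub hF) ?_
  filter_upwards [eventually_le_atBot b] with a hab
  exact intervalIntegral.integral_le_sub_of_hasDeriv_right_of_le hab
    (fun x hx => (hderiv x hx.2).continuousAt.continuousWithinAt)
    (fun x hx => (hderiv x hx.2.le).hasDerivWithinAt) (hf.mono_set Icc_subset_Iic_self)
    (fun x hx => hle x hx.2.le)

end ImproperComparison

lemma integrable_exp_neg_sq : Integrable (fun y : ℝ => exp (-y ^ 2)) := by
  simpa using integrable_exp_neg_mul_sq one_pos

lemma tendsto_exp_neg_sq_atBot : Tendsto (fun y : ℝ => exp (-y ^ 2)) atBot (𝓝 0) := by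
  rw [tendsto_exp_comp_nhds_zero]
  have := (tendsto_pow_atTop (two_ne_zero (α := ℕ))).comp (tendsto_neg_atBot_atTop (G := ℝ))
  simpa [Function.comp_def] using tendsto_neg_atTop_atBot.comp this

lemma hasDerivAt_exp_neg_sq (y : ℝ) :
    HasDerivAt (fun y : ℝ => exp (-y ^ 2)) (-2 * y * exp (-y ^ 2)) y := by
  have h : HasDerivAt (fun y : ℝ => -y ^ 2) (-(2 * y)) y := by
    simpa using (hasDerivAt_pow 2 y).fun_neg
  convert h.exp using 1
  ring

noncomputable def gaussIic (η : ℝ) : ℝ := ∫ y in Iic η, exp (-y ^ 2)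

lemma one_add_erf_eq (η : ℝ) : 1 + erf η = 2 / √π * gaussIic η := by
  have hsplit : gaussIic η - gaussIic 0 = ∫ y in (0 : ℝ)..η, exp (-y ^ 2) :=
    intervalIntegral.integral_Iic_sub_Iic integrable_exp_neg_sq.integrableOn
      integrable_exp_neg_sq.integrableOn
  have hhalf : gaussIic 0 = √π / 2 := by
    rw [gaussIic, ← neg_zero, ← integral_comp_neg_Ioi]
    simpa using integral_gaussian_Ioi 1
  have hpi : √π ≠ 0 := (sqrt_pos.2 pi_pos).ne'
  rw [erf, ← hsplit, hhalf]
  field_simp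
  ring

lemma exp_neg_sq_add_two_mul_gaussIic_nonneg (η : ℝ) :
    0 ≤ exp (-η ^ 2) + 2 * η * gaussIic η := by
  rcases le_or_gt 0 η with hη | hη
  · have : 0 ≤ gaussIic η := setIntegral_nonneg measurableSet_Iic fun y _ => (exp_pos _).le
    positivity
  have hbound : gaussIic η ≤ exp (-η ^ 2) / (-2 * η) - 0 := by
    refine integral_Iic_le_sub_of_hasDerivAt_of_le
      (fun y _ => (hasDerivAt_exp_neg_sq y).div_const (-2 * η)) (fun y hy => ?_)
      integrable_exp_neg_sq.integrableOn (by simpa using tendsto_exp_neg_sq_atBot.div_const _)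
    rw [show -2 * y * exp (-y ^ 2) / (-2 * η) = y / η * exp (-y ^ 2) by field_simp]
    exact le_mul_of_one_le_left (exp_pos _).le ((one_le_div_of_neg hη).2 hy)
  rw [sub_zero, le_div_iff₀ (by linarith)] at hbound
  linarith

noncomputable def birnbaumBound (y : ℝ) : ℝ := exp (-y ^ 2) * ((y + √(y ^ 2 + 2)) / 2)

lemma hasDerivAt_birnbaumBound (y : ℝ) :
    HasDerivAt birnbaumBound
      (exp (-y ^ 2) * ((y + √(y ^ 2 + 2)) * (1 - 2 * y * √(y ^ 2 + 2)) / (2 * √(y ^ 2 + 2))))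
      y := by
  have hsqrt : HasDerivAt (fun y : ℝ => √(y ^ 2 + 2)) (2 * y / (2 * √(y ^ 2 + 2))) y :=
    ((hasDerivAt_pow 2 y).add_const 2).sqrt (by positivity) |>.congr_deriv (by simp)
  refine ((hasDerivAt_exp_neg_sq y).fun_mul
    (((hasDerivAt_id' y).fun_add hsqrt).div_const 2)).congr_deriv ?_
  field_simp
  ring

lemma deriv_birnbaumBound_le (y : ℝ) :
    exp (-y ^ 2) * ((y + √(y ^ 2 + 2)) * (1 - 2 * y * √(y ^ 2 + 2)) / (2 * √(y ^ 2 + 2)))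
      ≤ exp (-y ^ 2) := by
  have hs : 0 < √(y ^ 2 + 2) := sqrt_pos.2 (by positivity)
  have hs2 : √(y ^ 2 + 2) ^ 2 = y ^ 2 + 2 := sq_sqrt (by positivity)
  refine mul_le_of_le_one_right (exp_pos _).le ((div_le_one (by positivity)).2 ?_)
  nlinarith [sq_nonneg (y * √(y ^ 2 + 2) + y ^ 2 + 1), sq_nonneg (y + √(y ^ 2 + 2))]

lemma birnbaumBound_pos (y : ℝ) : 0 < birnbaumBound y := by
  have hs : 0 < √(y ^ 2 + 2) := sqrt_pos.2 (by positivity)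
  have hs2 : √(y ^ 2 + 2) ^ 2 = y ^ 2 + 2 := sq_sqrt (by positivity)
  have : 0 < y + √(y ^ 2 + 2) := by nlinarith
  unfold birnbaumBound
  positivity

lemma tendsto_birnbaumBound_atBot : Tendsto birnbaumBound atBot (𝓝 0) := by
  refine squeeze_zero' (.of_forall fun y => (birnbaumBound_pos y).le) ?_ tendsto_exp_neg_sq_atBot
  filter_upwards [eventually_le_atBot 0] with y hy
  have hs : √(y ^ 2 + 2) ≤ 2 - y := sqrt_le_iff.2 ⟨by linarith, by nlinarith⟩
  exact mul_le_of_le_one_right (exp_pos _).le (by linarith)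

lemma birnbaumBound_le_gaussIic (η : ℝ) : birnbaumBound η ≤ gaussIic η := by
  simpa [gaussIic] using
    sub_le_integral_Iic_of_hasDerivAt_of_le (fun y _ => hasDerivAt_birnbaumBound y)
      (fun y _ => deriv_birnbaumBound_le y) integrable_exp_neg_sq.integrableOn
      tendsto_birnbaumBound_atBot

lemma gfun_eq (η : ℝ) :
    gfun η = 1 - exp (-η ^ 2) * (exp (-η ^ 2) + 2 * η * gaussIic η) / (2 * gaussIic η ^ 2) := by
  have hE : gaussIic η ≠ 0 := ((birnbaumBound_pos η).trans_le (birnbaumBound_le_gaussIic η)).ne'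
  have hpi : √π ≠ 0 := (sqrt_pos.2 pi_pos).ne'
  rw [gfun, one_add_erf_eq]
  field_simp

lemma mul_add_two_mul_le_two_mul_sq {X E η : ℝ} (hX : 0 ≤ X)
    (hE : X * ((η + √(η ^ 2 + 2)) / 2) ≤ E) : X * (X + 2 * η * E) ≤ 2 * E ^ 2 := by
  have hs : 0 < √(η ^ 2 + 2) := sqrt_pos.2 (by positivity)
  have hs2 : √(η ^ 2 + 2) ^ 2 = η ^ 2 + 2 := sq_sqrt (by positivity)
  have hfactor : 2 * E ^ 2 - X * (X + 2 * η * E)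
      = 2 * (E - X * ((η + √(η ^ 2 + 2)) / 2)) * (E - X * ((η - √(η ^ 2 + 2)) / 2)) := by
    linear_combination (X ^ 2 / 2) * hs2
  have hsmaller : 0 ≤ E - X * ((η - √(η ^ 2 + 2)) / 2) := by nlinarith
  rw [← sub_nonneg, hfactor]
  exact mul_nonneg (mul_nonneg zero_le_two (sub_nonneg.2 hE)) hsmaller

theorem stmt_1 : ∀ η : ℝ, 0 ≤ gfun η ∧ gfun η ≤ 1 := by
  intro η
  have hE : 0 < gaussIic η := (birnbaumBound_pos η).trans_le (birnbaumBound_le_gaussIic η)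
  have hquad := mul_add_two_mul_le_two_mul_sq (exp_pos (-η ^ 2)).le (birnbaumBound_le_gaussIic η)
  have hmills := exp_neg_sq_add_two_mul_gaussIic_nonneg η
  rw [gfun_eq, sub_nonneg, sub_le_self_iff, div_le_one (by positivity)]
  exact ⟨hquad, div_nonneg (mul_nonneg (exp_pos _).le hmills) (by positivity)⟩
end

section
/- Let σ > 0, W₀ < 0, B ∈ ℝ, and let Φ : ℝ → ℝ be C¹ with 0 ≤ Φ(x) ≤ Φ(B) for all x ≤ B, and suppose Φ'(W₀m + B) > 1/W₀ for all m ≥ 0. Define G(m) = Φ(W₀m+B) + σ·exp(-Φ(W₀m+B)²/(2σ))/Z(m) - m, where Z(m) = √(πσ/2)·(1 + erf(Φ(W₀m+B)/√(2σ))). Then G has a unique zero m* in [0,∞). -/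
open Real Set

noncomputable def qf (x : ℝ) : ℝ := Real.sqrt π / 2 + ∫ t in (0:ℝ)..x, Real.exp (-t^2)

lemma cont_integrand : Continuous fun t : ℝ => Real.exp (-t^2) := by continuity

lemma qf_hasDerivAt (x : ℝ) : HasDerivAt qf (Real.exp (-x^2)) x := by
  have h := intervalIntegral.integral_hasDerivAt_right
    (cont_integrand.intervalIntegrable 0 x)
    (cont_integrand.stronglyMeasurableAtFilter _ _) cont_integrand.continuousAt
  exact h.const_add (Real.sqrt π / 2)

lemma qf_diff : Differentiable ℝ qf := fun x => (qf_hasDerivAt x).differentiableAt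

lemma qf_mono : Monotone qf := by
  apply monotone_of_deriv_nonneg qf_diff
  intro x
  rw [(qf_hasDerivAt x).deriv]
  positivity

lemma qf_zero : qf 0 = Real.sqrt π / 2 := by simp [qf]

lemma qf_lb {x : ℝ} (hx : 0 ≤ x) : Real.sqrt π / 2 ≤ qf x := by
  rw [← qf_zero]; exact qf_mono hx

lemma qf_pos {x : ℝ} (hx : 0 ≤ x) : 0 < qf x := by
  have h := qf_lb hx
  have : (0:ℝ) < Real.sqrt π / 2 := by
    have := Real.pi_pos
    positivity
  linarith

noncomputable def Kf (x : ℝ) : ℝ := qf x - Real.exp (-x^2) * (x + Real.sqrt (x^2+2)) / 2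

lemma sq2_pos (x : ℝ) : (0:ℝ) < x^2 + 2 := by positivity

lemma sqrt_hasDerivAt (x : ℝ) : HasDerivAt (fun y : ℝ => Real.sqrt (y^2+2)) (x / Real.sqrt (x^2+2)) x := by
  have h1 : HasDerivAt (fun y : ℝ => y^2 + 2) (2*x) x := by
    simpa using ((hasDerivAt_pow 2 x).add_const 2)
  have h2 := h1.sqrt (ne_of_gt (sq2_pos x))
  convert h2 using 1
  field_simp

lemma exp_hasDerivAt (x : ℝ) : HasDerivAt (fun y : ℝ => Real.exp (-y^2)) (-(2*x) * Real.exp (-x^2)) x := by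
  have h1 : HasDerivAt (fun y : ℝ => -y^2) (-(2*x)) x := by
    simpa using (hasDerivAt_pow 2 x).fun_neg
  simpa [mul_comm] using h1.exp

lemma Kf_hasDerivAt (x : ℝ) : HasDerivAt Kf
    (Real.exp (-x^2) - (-(2*x) * Real.exp (-x^2) * (x + Real.sqrt (x^2+2)) + Real.exp (-x^2) * (1 + x / Real.sqrt (x^2+2))) / 2) x := by
  have h1 : HasDerivAt (fun y : ℝ => y + Real.sqrt (y^2+2)) (1 + x / Real.sqrt (x^2+2)) x :=
    (hasDerivAt_id x).add (sqrt_hasDerivAt x)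
  have h2 := ((exp_hasDerivAt x).mul h1).div_const 2
  exact (qf_hasDerivAt x).sub h2

lemma Kf_deriv_nonneg {x : ℝ} (hx : 0 ≤ x) : 0 ≤ deriv Kf x := by
  rw [(Kf_hasDerivAt x).deriv]
  set s := Real.sqrt (x^2+2) with hs
  have hs0 : 0 < s := Real.sqrt_pos.mpr (sq2_pos x)
  have hs2 : s^2 = x^2+2 := Real.sq_sqrt (le_of_lt (sq2_pos x))
  have hs1 : 1 ≤ s := by nlinarith
  have hp : 0 < Real.exp (-x^2) := Real.exp_pos _
  have hdiv : x / s ≤ x := div_le_self hx hs1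
  set p := Real.exp (-x^2)
  have key : -(2*x) * p * (x + s) + p * (1 + x / s) ≤ 2 * p := by
    have h1 : p * (1 + x/s) ≤ p * (1 + x) := by
      apply mul_le_mul_of_nonneg_left _ hp.le
      linarith
    nlinarith [mul_nonneg (mul_nonneg hx hp.le) (by linarith : (0:ℝ) ≤ x + s),
      mul_nonneg (mul_nonneg hx hp.le) hx]
  linarith

lemma Kf_diff : Differentiable ℝ Kf := fun x => (Kf_hasDerivAt x).differentiableAt

lemma Kf_mono : MonotoneOn Kf (Ici 0) := by
  apply monotoneOn_of_deriv_nonneg (convex_Ici 0) Kf_diff.continuous.continuousOn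
    (Kf_diff.differentiableOn)
  intro x hx
  rw [interior_Ici] at hx
  exact Kf_deriv_nonneg (le_of_lt hx)

lemma Kf_zero_nonneg : 0 ≤ Kf 0 := by
  have h2 : Real.sqrt 2 ≤ Real.sqrt π := Real.sqrt_le_sqrt (by linarith [Real.pi_gt_three])
  simp only [Kf, qf_zero]
  norm_num
  linarith

lemma komatu {x : ℝ} (hx : 0 ≤ x) : Real.exp (-x^2) * (x + Real.sqrt (x^2+2)) ≤ 2 * qf x := by
  have h := Kf_mono (self_mem_Ici) hx hx
  have h0 := Kf_zero_nonneg
  simp only [Kf] at h h0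
  linarith

noncomputable def Ff (x : ℝ) : ℝ := x + Real.exp (-x^2) / (2 * qf x)

lemma Ff_hasDerivAt {x : ℝ} (hq : qf x ≠ 0) : HasDerivAt Ff
    (1 + (-(2*x) * Real.exp (-x^2) * (2 * qf x) - Real.exp (-x^2) * (2 * Real.exp (-x^2))) / (2 * qf x)^2) x := by
  have hexp : HasDerivAt (fun y : ℝ => Real.exp (-y^2)) (-(2*x) * Real.exp (-x^2)) x := by
    have h1 : HasDerivAt (fun y : ℝ => -y^2) (-(2*x)) x := by
      simpa using (hasDerivAt_pow 2 x).fun_neg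
    simpa [mul_comm] using h1.exp
  have hden : HasDerivAt (fun y : ℝ => 2 * qf y) (2 * Real.exp (-x^2)) x :=
    (qf_hasDerivAt x).const_mul 2
  have hden0 : 2 * qf x ≠ 0 := by simpa using hq
  exact (hasDerivAt_id x).add (hexp.div hden hden0)

lemma Ff_deriv_nonneg {x : ℝ} (hx : 0 ≤ x) : 0 ≤ deriv Ff x := by
  have hq := qf_pos hx
  rw [(Ff_hasDerivAt (ne_of_gt hq)).deriv]
  set p := Real.exp (-x^2) with hpdef
  set q := qf x with hqdef
  have hp : 0 < p := Real.exp_pos _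
  have hs0 : 0 ≤ Real.sqrt (x^2+2) := Real.sqrt_nonneg _
  have hs2 : (Real.sqrt (x^2+2))^2 = x^2+2 := Real.sq_sqrt (le_of_lt (sq2_pos x))
  set s := Real.sqrt (x^2+2)
  have hsx : x ≤ s := by nlinarith
  have hk : p * (x + s) ≤ 2 * q := komatu hx
  have hnum : 0 ≤ (2*q)^2 + (-(2*x) * p * (2*q) - p * (2*p)) := by
    nlinarith [mul_nonneg (sub_nonneg.2 hk) hq.le,
      mul_nonneg (sub_nonneg.2 hk) (mul_nonneg hp.le (sub_nonneg.2 hsx)), sq_nonneg p, sq_nonneg (p*s), mul_pos hp hq]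
  have hq2 : (0:ℝ) < (2*q)^2 := by positivity
  have : 1 + (-(2*x) * p * (2*q) - p * (2*p)) / (2*q)^2
      = ((2*q)^2 + (-(2*x) * p * (2*q) - p * (2*p))) / (2*q)^2 := by
    field_simp
  rw [this]
  positivity

lemma Ff_mono : MonotoneOn Ff (Ici 0) := by
  apply monotoneOn_of_deriv_nonneg (convex_Ici 0)
  · intro x hx
    exact ((Ff_hasDerivAt (ne_of_gt (qf_pos hx))).differentiableAt).continuousAt.continuousWithinAt
  · intro x hx
    rw [interior_Ici] at hx
    exact ((Ff_hasDerivAt (ne_of_gt (qf_pos hx.le))).differentiableAt).differentiableWithinAt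
  · intro x hx
    rw [interior_Ici] at hx
    exact Ff_deriv_nonneg hx.le

lemma sqrtpi_pos : 0 < Real.sqrt π := Real.sqrt_pos.mpr Real.pi_pos

lemma erf_eq (x : ℝ) : erf x = 2 / Real.sqrt π * (qf x - Real.sqrt π / 2) := by
  simp [erf, qf]

lemma erf_cont : Continuous erf := by
  have : erf = fun x => 2 / Real.sqrt π * (qf x - Real.sqrt π / 2) := funext erf_eq
  rw [this]
  exact continuous_const.mul (qf_diff.continuous.sub continuous_const)

lemma one_add_erf (x : ℝ) : 1 + erf x = 2 / Real.sqrt π * qf x := by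
  rw [erf_eq]
  have h := sqrtpi_pos
  field_simp
  ring

lemma Ff_pos {x : ℝ} (hx : 0 ≤ x) : 0 < Ff x := by
  have h1 : 0 < Real.exp (-x^2) / (2 * qf x) := by
    have := qf_pos hx; positivity
  simp only [Ff]; linarith

lemma Ff_ub {x : ℝ} (hx : 0 ≤ x) : Ff x ≤ x + 1 := by
  have h1 : Real.exp (-x^2) ≤ 1 := by
    rw [show (1:ℝ) = Real.exp 0 by simp]
    exact Real.exp_le_exp.2 (by nlinarith)
  have hpi : (1:ℝ) ≤ Real.sqrt π := by
    rw [show (1:ℝ) = Real.sqrt 1 by simp]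
    exact Real.sqrt_le_sqrt (by linarith [Real.pi_gt_three])
  have hq : (1:ℝ) ≤ 2 * qf x := by have := qf_lb hx; linarith
  have h2 : Real.exp (-x^2) / (2 * qf x) ≤ 1 := by
    calc Real.exp (-x^2) / (2 * qf x) ≤ Real.exp (-x^2) / 1 :=
          div_le_div_of_nonneg_left (Real.exp_pos _).le (by linarith) hq
      _ ≤ 1 := by simpa using h1
  simp only [Ff]; linarith

lemma Ff_lip {x y : ℝ} (hx : 0 ≤ x) (hxy : x ≤ y) : Ff y - Ff x ≤ y - x := by
  have hpy : Real.exp (-y^2) ≤ Real.exp (-x^2) := Real.exp_le_exp.2 (by nlinarith)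
  have hqx : 0 < qf x := qf_pos hx
  have hqm : qf x ≤ qf y := qf_mono hxy
  have h : Real.exp (-y^2) / (2 * qf y) ≤ Real.exp (-x^2) / (2 * qf x) :=
    div_le_div₀ (Real.exp_pos _).le hpy (by linarith) (by linarith)
  simp only [Ff]; linarith

set_option maxHeartbeats 1000000 in
theorem stmt_4 (σ W₀ B : ℝ) (hσ : 0 < σ) (hW : W₀ < 0)
    (Φ : ℝ → ℝ) (hΦ : ContDiff ℝ 1 Φ)
    (hΦbd : ∀ x ≤ B, 0 ≤ Φ x ∧ Φ x ≤ Φ B)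
    (hΦ' : ∀ m : ℝ, 0 ≤ m → deriv Φ (W₀ * m + B) > 1 / W₀)
    (Z : ℝ → ℝ)
    (hZ : ∀ m, Z m = Real.sqrt (π * σ / 2) * (1 + erf (Φ (W₀ * m + B) / Real.sqrt (2 * σ))))
    (G : ℝ → ℝ)
    (hG : ∀ m, G m = Φ (W₀ * m + B)
        + σ * Real.exp (-(Φ (W₀ * m + B))^2 / (2 * σ)) / Z m - m) :
    ∃! m : ℝ, 0 ≤ m ∧ G m = 0 := by
  set c := Real.sqrt (2 * σ) with hcdef
  have hc : 0 < c := Real.sqrt_pos.mpr (by linarith)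
  have hc2 : c ^ 2 = 2 * σ := Real.sq_sqrt (by linarith)
  -- Φ bounds for m ≥ 0
  have hA : ∀ m : ℝ, 0 ≤ m → 0 ≤ Φ (W₀ * m + B) ∧ Φ (W₀ * m + B) ≤ Φ B := by
    intro m hm
    refine hΦbd _ ?_
    nlinarith [mul_nonneg (neg_nonneg.2 hW.le) hm]
  have hΦB0 : 0 ≤ Φ B := (hΦbd B le_rfl).1
  -- sqrt identity
  have hsq : Real.sqrt (π * σ / 2) = c * Real.sqrt π / 2 := by
    rw [show π * σ / 2 = (c * Real.sqrt π / 2) ^ 2 by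
      rw [div_pow, mul_pow, hc2, Real.sq_sqrt Real.pi_pos.le]; ring]
    exact Real.sqrt_sq (by positivity)
  -- Z in terms of qf
  have hZq : ∀ m : ℝ, Z m = c * qf (Φ (W₀ * m + B) / c) := by
    intro m
    rw [hZ, one_add_erf, hsq]
    have h := sqrtpi_pos
    field_simp
  -- key formula
  have key : ∀ m : ℝ, 0 ≤ m → G m = c * Ff (Φ (W₀ * m + B) / c) - m := by
    intro m hm
    set A := Φ (W₀ * m + B) with hAdef
    have hA0 : 0 ≤ A := (hA m hm).1
    have hq : 0 < qf (A / c) := qf_pos (by positivity)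
    have hexp : -A ^ 2 / (2 * σ) = -(A / c) ^ 2 := by
      rw [div_pow, ← hc2]; field_simp
    rw [hG, hZq, hexp]
    simp only [Ff]
    have : σ = c ^ 2 / 2 := by rw [hc2]; ring
    rw [this]
    simp only [← hAdef]
    field_simp
  -- uniqueness helper
  have huniq : ∀ m₁ m₂ : ℝ, 0 ≤ m₁ → 0 ≤ m₂ → G m₁ = 0 → G m₂ = 0 → m₁ < m₂ → False := by
    intro m₁ m₂ h1 h2 hG1 hG2 hlt
    set A₁ := Φ (W₀ * m₁ + B) with hA1def
    set A₂ := Φ (W₀ * m₂ + B) with hA2def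
    have hA10 : 0 ≤ A₁ := (hA m₁ h1).1
    have hA20 : 0 ≤ A₂ := (hA m₂ h2).1
    have hη1 : (0:ℝ) ≤ A₁ / c := by positivity
    have hη2 : (0:ℝ) ≤ A₂ / c := by positivity
    have hk1 : c * Ff (A₁ / c) = m₁ := by have := key m₁ h1; rw [hG1] at this; linarith
    have hk2 : c * Ff (A₂ / c) = m₂ := by have := key m₂ h2; rw [hG2] at this; linarith
    have hFflt : Ff (A₁ / c) < Ff (A₂ / c) := by
      have h : c * Ff (A₁ / c) < c * Ff (A₂ / c) := by rw [hk1, hk2]; exact hlt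
      exact lt_of_mul_lt_mul_left h hc.le
    have hηlt : A₁ / c < A₂ / c := by
      by_contra h
      push_neg at h
      exact absurd (Ff_mono hη2 hη1 h) (not_le.2 hFflt)
    have hAlt : A₁ < A₂ := (div_lt_div_iff_of_pos_right hc).mp hηlt
    -- 1-Lipschitz bound
    have hLip : Ff (A₂ / c) - Ff (A₁ / c) ≤ A₂ / c - A₁ / c := Ff_lip hη1 hηlt.le
    have hm21 : m₂ - m₁ ≤ A₂ - A₁ := by
      have h := mul_le_mul_of_nonneg_left hLip hc.le
      rw [mul_sub, hk1, hk2] at h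
      have h2 : c * (A₂ / c - A₁ / c) = A₂ - A₁ := by field_simp
      linarith [h2 ▸ h]
    -- MVT bound
    have hab : W₀ * m₂ + B < W₀ * m₁ + B := by
      nlinarith [mul_pos (neg_pos.2 hW) (sub_pos.2 hlt)]
    obtain ⟨ξ, hξ, hslope⟩ := exists_hasDerivAt_eq_slope Φ (deriv Φ)
      hab hΦ.continuous.continuousOn
      (fun x _ => ((hΦ.differentiable one_ne_zero) x).hasDerivAt)
    have hW0 : W₀ ≠ 0 := ne_of_lt hW
    have hcξ : W₀ * ((ξ - B) / W₀) + B = ξ := by field_simp; ring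
    have hcξ0 : 0 ≤ (ξ - B) / W₀ := by
      by_contra h
      push_neg at h
      have hb : ξ < W₀ * m₁ + B := hξ.2
      have h1' : W₀ * ((ξ - B) / W₀) = ξ - B := by field_simp
      nlinarith [mul_pos (neg_pos.2 hW) (neg_pos.2 h), mul_nonneg (neg_nonneg.2 hW.le) h1]
    have hd : deriv Φ ξ > 1 / W₀ := by
      have := hΦ' _ hcξ0
      rwa [hcξ] at this
    have hWd : W₀ * deriv Φ ξ < 1 := by
      have h := mul_lt_mul_of_neg_left hd hW
      rwa [mul_one_div_cancel hW0] at h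
    have hne : W₀ * m₁ + B - (W₀ * m₂ + B) ≠ 0 := by
      intro h; nlinarith [hab]
    rw [eq_div_iff hne] at hslope
    -- hslope : deriv Φ ξ * (b - a) = Φ b - Φ a, i.e. = A₁ - A₂
    have hfin : A₂ - A₁ < m₂ - m₁ := by
      have hexp : A₂ - A₁ = (W₀ * deriv Φ ξ) * (m₂ - m₁) := by
        linear_combination hslope
      rw [hexp]
      have h5 := mul_lt_mul_of_pos_right hWd (sub_pos.2 hlt)
      linarith
    linarith
  -- existence
  set M := Φ B + c + 1 with hMdef
  have hM0 : (0:ℝ) ≤ M := by positivity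
  have hG0 : 0 < G 0 := by
    rw [key 0 le_rfl]
    have h := Ff_pos (x := Φ (W₀ * 0 + B) / c) (div_nonneg (hA 0 le_rfl).1 hc.le)
    nlinarith [mul_pos hc h]
  have hGM : G M < 0 := by
    rw [key M hM0]
    have hAM := hA M hM0
    have hη : (0:ℝ) ≤ Φ (W₀ * M + B) / c := div_nonneg (hA M hM0).1 hc.le
    have hub := Ff_ub hη
    have h2 : c * Ff (Φ (W₀ * M + B) / c) ≤ c * (Φ (W₀ * M + B) / c + 1) :=
      mul_le_mul_of_nonneg_left hub hc.le
    have h3 : c * (Φ (W₀ * M + B) / c + 1) = Φ (W₀ * M + B) + c := by field_simp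
    have h4 : Φ (W₀ * M + B) ≤ Φ B := hAM.2
    linarith [h2, h3, h4, hMdef]
  have hGcont : ContinuousOn G (Icc 0 M) := by
    have hcΦ : Continuous fun m => Φ (W₀ * m + B) :=
      hΦ.continuous.comp (by continuity)
    have hZcont : Continuous Z := by
      have : Z = fun m => Real.sqrt (π * σ / 2) *
          (1 + erf (Φ (W₀ * m + B) / Real.sqrt (2 * σ))) := funext hZ
      rw [this]
      exact continuous_const.mul (continuous_const.add
        (erf_cont.comp (hcΦ.div_const _)))
    have hZne : ∀ m ∈ Icc (0:ℝ) M, Z m ≠ 0 := by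
      intro m hm
      rw [hZq m]
      have h0 := (hA m hm.1).1
      have := qf_pos (x := Φ (W₀ * m + B) / c) (by positivity)
      positivity
    have : ContinuousOn (fun m => Φ (W₀ * m + B)
        + σ * Real.exp (-(Φ (W₀ * m + B))^2 / (2 * σ)) / Z m - m) (Icc 0 M) := by
      apply ContinuousOn.sub
      apply ContinuousOn.add hcΦ.continuousOn
      apply ContinuousOn.div
      · exact (continuous_const.mul (Real.continuous_exp.comp
          (by continuity))).continuousOn
      · exact hZcont.continuousOn
      · exact hZne
      · exact continuous_id.continuousOn
    exact this.congr (fun m _ => hG m)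
  have hsub : Icc (G M) (G 0) ⊆ G '' Icc 0 M := intermediate_value_Icc' hM0 hGcont
  obtain ⟨m, hmIcc, hGm⟩ := hsub ⟨hGM.le, hG0.le⟩
  refine ⟨m, ⟨hmIcc.1, hGm⟩, ?_⟩
  rintro y ⟨hy0, hGy⟩
  rcases lt_trichotomy y m with h | h | h
  · exact absurd (huniq y m hy0 hmIcc.1 hGy hGm h) (fun hf => hf)
  · exact h
  · exact absurd (huniq m y hmIcc.1 hy0 hGm hGy h) (fun hf => hf)
end
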